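/- Let Y be a real random variable such that there exist n ∈ N, c > 0 with the property that X = (t·(Y_1 + ⋯ + Y_n)) mod 1 is c-good (i.e. P(X ∈ A) ≥ c·Leb(A) for all measurable A ⊆ T), where Y_1, …, Y_n are i.i.d. copies of Y. Then for the operator (A_t f)(x) = E f(x ⊕ tY) and every f ∈ L_p(T), 1 ≤ p < ∞, with ∫_T f = 0, one has ‖f − A_t f‖_p ≥ (c/n)·‖f‖_p. -/

import Mathlib

/-!
Write `A_κ f (x) = ∫ f (x + a) dκ(a)`. On a group with invariant measure, Hölder's inequality and
Fubini give `‖A_κ g‖_p ≤ κ(G) ‖g‖_p`, and `A_{κ ∗ ρ} = A_κ A_ρ`, so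
`f - A_{κ ∗ ρ} f = (f - A_κ f) + A_κ (f - A_ρ f)`. With `λ` the law of `tY mod 1`, whose `n`-th
convolution power is the law of `t(Y_1 + ⋯ + Y_n) mod 1`, telescoping gives
`‖f - A_{λ^{∗n}} f‖_p ≤ n ‖f - A_λ f‖_p`. If `λ^{∗n} ≥ c · Leb`, the Lebesgue part annihilates the
mean-zero `f`, so `‖A_{λ^{∗n}} f‖_p ≤ (1 - c) ‖f‖_p`; hence
`‖f‖_p ≤ n ‖f - A_λ f‖_p + (1 - c) ‖f‖_p`.
-/

open MeasureTheory ENNReal ProbabilityTheory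

noncomputable def translateAverage {G : Type*} [Add G] [MeasurableSpace G] (κ : Measure G)
    (f : G → ℝ) (x : G) : ℝ :=
  ∫ a, f (x + a) ∂κ

theorem translateAverage_sub_apply {G : Type*} [Add G] [MeasurableSpace G] (κ : Measure G)
    {f g : G → ℝ} {x : G} (hf : Integrable (fun a => f (x + a)) κ)
    (hg : Integrable (fun a => g (x + a)) κ) :
    translateAverage κ (f - g) x = translateAverage κ f x - translateAverage κ g x :=
  integral_sub hf hg

theorem rpow_lintegral_le_mul_lintegral_rpow {α : Type*} [MeasurableSpace α] (κ : Measure α)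
    {r : ℝ} (hr : 1 ≤ r) {F : α → ℝ≥0∞} (hF : Measurable F) :
    (∫⁻ a, F a ∂κ) ^ r ≤ κ Set.univ ^ (r - 1) * ∫⁻ a, F a ^ r ∂κ := by
  obtain rfl | hr1 := hr.eq_or_lt
  · simp
  have hHolder := ENNReal.lintegral_mul_le_Lp_mul_Lq κ (.conjExponent hr1) hF.aemeasurable
    (aemeasurable_const (b := (1 : ℝ≥0∞)))
  simp only [Pi.mul_apply, mul_one, ENNReal.one_rpow, lintegral_const, one_mul] at hHolder
  calc (∫⁻ a, F a ∂κ) ^ r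
      ≤ ((∫⁻ a, F a ^ r ∂κ) ^ (1 / r) * κ Set.univ ^ (1 / r.conjExponent)) ^ r := by
        gcongr
    _ = κ Set.univ ^ (r - 1) * ∫⁻ a, F a ^ r ∂κ := by
        rw [ENNReal.mul_rpow_of_nonneg _ _ (by positivity), ← ENNReal.rpow_mul,
          ← ENNReal.rpow_mul, one_div_mul_cancel (by positivity), ENNReal.rpow_one, mul_comm]
        congr 2
        simp only [Real.conjExponent]
        field_simp

noncomputable def convPow {M : Type*} [AddMonoid M] [MeasurableSpace M] (lam : Measure M) :
    ℕ → Measure M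
  | 0 => Measure.dirac 0
  | n + 1 => convPow lam n ∗ lam

instance isProbabilityMeasure_convPow {M : Type*} [AddMonoid M] [MeasurableSpace M]
    [MeasurableAdd₂ M] (lam : Measure M) [IsProbabilityMeasure lam] (n : ℕ) :
    IsProbabilityMeasure (convPow lam n) := by
  induction n with
  | zero => exact Measure.dirac.isProbabilityMeasure
  | succ n ih => exact Measure.probabilitymeasure_of_probabilitymeasures_conv _ _

section Group

variable {G : Type*} [AddGroup G] [MeasurableSpace G] [MeasurableAdd₂ G]

theorem measurable_translateAverage (κ : Measure G) [SFinite κ] {f : G → ℝ}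
    (hf : Measurable f) : Measurable (translateAverage κ f) :=
  (hf.comp measurable_add).stronglyMeasurable.integral_prod_right'.measurable

theorem translateAverage_dirac_zero {f : G → ℝ} (hf : Measurable f) :
    translateAverage (Measure.dirac 0) f = f := by
  ext x
  rw [translateAverage, integral_dirac' (fun a => f (x + a)) 0
    (hf.comp (measurable_const_add x)).stronglyMeasurable, add_zero]

theorem translateAverage_conv_apply (κ ρ : Measure G) [SFinite κ] [SFinite ρ] {f : G → ℝ}
    {x : G} (hx : Integrable (fun a => f (x + a)) (κ ∗ ρ)) :
    translateAverage (κ ∗ ρ) f x = translateAverage κ (translateAverage ρ f) x := by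
  simp only [translateAverage, integral_conv hx, add_assoc]

variable (μ : Measure G) [μ.IsAddRightInvariant] [SFinite μ]

theorem lintegral_lintegral_comp_add (κ : Measure G) [SFinite κ] {g : G → ℝ≥0∞}
    (hg : Measurable g) :
    ∫⁻ x, ∫⁻ a, g (x + a) ∂κ ∂μ = κ Set.univ * ∫⁻ x, g x ∂μ := by
  rw [lintegral_lintegral_swap (f := fun x a => g (x + a)) (hg.comp measurable_add).aemeasurable]
  simp [lintegral_add_right_eq_self, mul_comm]

theorem integrable_comp_add_prod (κ : Measure G) [IsFiniteMeasure κ] {f : G → ℝ}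
    (hfm : Measurable f) (hf : Integrable f μ) :
    Integrable (fun q : G × G => f (q.1 + q.2)) (μ.prod κ) := by
  refine ⟨(hfm.comp measurable_add).aestronglyMeasurable, ?_⟩
  rw [HasFiniteIntegral, lintegral_prod (fun q : G × G => ‖f (q.1 + q.2)‖ₑ)
    (hfm.comp measurable_add).enorm.aemeasurable,
    lintegral_lintegral_comp_add μ κ hfm.enorm]
  exact mul_lt_top (measure_lt_top κ _) hf.2

theorem integrable_translateAverage (κ : Measure G) [IsFiniteMeasure κ] {f : G → ℝ}
    (hfm : Measurable f) (hf : Integrable f μ) : Integrable (translateAverage κ f) μ :=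
  (integrable_comp_add_prod μ κ hfm hf).integral_prod_left

theorem ae_integrable_comp_add (κ : Measure G) [IsFiniteMeasure κ] {f : G → ℝ}
    (hfm : Measurable f) (hf : Integrable f μ) :
    ∀ᵐ x ∂μ, Integrable (fun a => f (x + a)) κ :=
  (integrable_comp_add_prod μ κ hfm hf).prod_right_ae

theorem eLpNorm_translateAverage_le (κ : Measure G) [IsFiniteMeasure κ] {p : ℝ≥0∞}
    (hp : 1 ≤ p) (hp' : p ≠ ⊤) {f : G → ℝ} (hf : Measurable f) :
    eLpNorm (translateAverage κ f) p μ ≤ κ Set.univ * eLpNorm f p μ := by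
  have hp0 : p ≠ 0 := (one_pos.trans_le hp).ne'
  set r := p.toReal
  have hr : 1 ≤ r := by simpa using ENNReal.toReal_mono hp' hp
  have hpointwise (x : G) : ‖translateAverage κ f x‖ₑ ^ r
      ≤ κ Set.univ ^ (r - 1) * ∫⁻ a, ‖f (x + a)‖ₑ ^ r ∂κ :=
    (ENNReal.rpow_le_rpow (enorm_integral_le_lintegral_enorm _) (by positivity)).trans
      (rpow_lintegral_le_mul_lintegral_rpow κ hr (hf.comp (measurable_const_add x)).enorm)
  have hintegral : ∫⁻ x, ‖translateAverage κ f x‖ₑ ^ r ∂μ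
      ≤ κ Set.univ ^ r * ∫⁻ x, ‖f x‖ₑ ^ r ∂μ := calc
    _ ≤ ∫⁻ x, κ Set.univ ^ (r - 1) * ∫⁻ a, ‖f (x + a)‖ₑ ^ r ∂κ ∂μ := lintegral_mono hpointwise
    _ = κ Set.univ ^ (r - 1) * (κ Set.univ * ∫⁻ x, ‖f x‖ₑ ^ r ∂μ) := by
      rw [lintegral_const_mul' _ _ (rpow_ne_top_of_nonneg (by linarith) (measure_ne_top κ _)),
        lintegral_lintegral_comp_add μ κ (hf.enorm.pow_const r)]
    _ = κ Set.univ ^ r * ∫⁻ x, ‖f x‖ₑ ^ r ∂μ := by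
      rw [← mul_assoc]
      congr 1
      conv_rhs => rw [← sub_add_cancel r 1]
      rw [ENNReal.rpow_add_of_nonneg _ _ (by linarith) zero_le_one, ENNReal.rpow_one]
  rw [eLpNorm_eq_lintegral_rpow_enorm_toReal hp0 hp',
    eLpNorm_eq_lintegral_rpow_enorm_toReal hp0 hp']
  calc (∫⁻ x, ‖translateAverage κ f x‖ₑ ^ r ∂μ) ^ (1 / r)
      ≤ (κ Set.univ ^ r * ∫⁻ x, ‖f x‖ₑ ^ r ∂μ) ^ (1 / r) := by gcongr
    _ = κ Set.univ * (∫⁻ x, ‖f x‖ₑ ^ r ∂μ) ^ (1 / r) := by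
      rw [ENNReal.mul_rpow_of_nonneg _ _ (by positivity), ← ENNReal.rpow_mul,
        mul_one_div_cancel (by positivity), ENNReal.rpow_one]

theorem eLpNorm_sub_translateAverage_conv_le (κ ρ : Measure G) [IsProbabilityMeasure κ]
    [IsProbabilityMeasure ρ] {p : ℝ≥0∞} (hp : 1 ≤ p) (hp' : p ≠ ⊤) {f : G → ℝ}
    (hfm : Measurable f) (hf : Integrable f μ) :
    eLpNorm (f - translateAverage (κ ∗ ρ) f) p μ
      ≤ eLpNorm (f - translateAverage κ f) p μ + eLpNorm (f - translateAverage ρ f) p μ := by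
  have hρm := measurable_translateAverage ρ hfm
  have hsplit : f - translateAverage (κ ∗ ρ) f =ᵐ[μ]
      (f - translateAverage κ f) + translateAverage κ (f - translateAverage ρ f) := by
    filter_upwards [ae_integrable_comp_add μ (κ ∗ ρ) hfm hf, ae_integrable_comp_add μ κ hfm hf,
      ae_integrable_comp_add μ κ hρm (integrable_translateAverage μ ρ hfm hf)] with x hκρ hκ hκρ'
    simp only [Pi.sub_apply, Pi.add_apply, translateAverage_conv_apply κ ρ hκρ,
      translateAverage_sub_apply κ hκ hκρ']
    ring
  calc eLpNorm (f - translateAverage (κ ∗ ρ) f) p μ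
      ≤ eLpNorm (f - translateAverage κ f) p μ
          + eLpNorm (translateAverage κ (f - translateAverage ρ f)) p μ := by
        rw [eLpNorm_congr_ae hsplit]
        exact eLpNorm_add_le (hfm.sub (measurable_translateAverage κ hfm)).aestronglyMeasurable
          (measurable_translateAverage κ (hfm.sub hρm)).aestronglyMeasurable hp
    _ ≤ _ := by
        gcongr
        simpa using eLpNorm_translateAverage_le μ κ hp hp' (hfm.sub hρm)

theorem eLpNorm_sub_translateAverage_convPow_le (lam : Measure G) [IsProbabilityMeasure lam]
    {p : ℝ≥0∞} (hp : 1 ≤ p) (hp' : p ≠ ⊤) {f : G → ℝ} (hfm : Measurable f) (hf : Integrable f μ)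
    (n : ℕ) :
    eLpNorm (f - translateAverage (convPow lam n) f) p μ
      ≤ n * eLpNorm (f - translateAverage lam f) p μ := by
  induction n with
  | zero => simp [convPow, translateAverage_dirac_zero hfm]
  | succ n ih =>
    calc eLpNorm (f - translateAverage (convPow lam (n + 1)) f) p μ
        ≤ eLpNorm (f - translateAverage (convPow lam n) f) p μ
            + eLpNorm (f - translateAverage lam f) p μ :=
          eLpNorm_sub_translateAverage_conv_le μ _ _ hp hp' hfm hf
      _ ≤ (n + 1 : ℕ) * eLpNorm (f - translateAverage lam f) p μ := by
          push_cast
          rw [add_one_mul]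
          gcongr

end Group

theorem ENNReal.mul_le_of_le_add_one_sub_mul {a c N : ℝ≥0∞} (hN : N ≠ ⊤) (hc : c ≤ 1)
    (h : N ≤ a + (1 - c) * N) : c * N ≤ a := by
  have hsum : c * N + (1 - c) * N = N := by rw [← add_mul, add_tsub_cancel_of_le hc, one_mul]
  rw [ENNReal.eq_sub_of_add_eq (mul_ne_top (sub_ne_top one_ne_top) hN) hsum]
  exact tsub_le_iff_right.2 h

section CommGroup

variable {G : Type*} [AddCommGroup G] [MeasurableSpace G] [MeasurableAdd₂ G]
  (μ : Measure G) [μ.IsAddLeftInvariant] [IsProbabilityMeasure μ]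

theorem eLpNorm_translateAverage_le_of_smul_le {κ : Measure G} [IsFiniteMeasure κ] {c : ℝ≥0∞}
    (hκ : c • μ ≤ κ) {p : ℝ≥0∞} (hp : 1 ≤ p) (hp' : p ≠ ⊤) {f : G → ℝ} (hfm : Measurable f)
    (hf : Integrable f μ) (hmean : ∫ x, f x ∂μ = 0) :
    eLpNorm (translateAverage κ f) p μ ≤ (κ Set.univ - c) * eLpNorm f p μ := by
  have : IsFiniteMeasure (c • μ) := isFiniteMeasure_of_le κ hκ
  have hsplit : translateAverage κ f =ᵐ[μ] translateAverage (κ - c • μ) f := by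
    filter_upwards [ae_integrable_comp_add μ (κ - c • μ) hfm hf,
      ae_integrable_comp_add μ (c • μ) hfm hf] with x hrest hhaar
    conv_lhs => rw [translateAverage, ← Measure.sub_add_cancel_of_le hκ]
    rw [integral_add_measure hrest hhaar, integral_smul_measure,
      integral_add_left_eq_self (μ := μ) f x, hmean, smul_zero, add_zero, translateAverage]
  rw [eLpNorm_congr_ae hsplit]
  simpa [Measure.sub_apply MeasurableSet.univ hκ] using
    eLpNorm_translateAverage_le μ (κ - c • μ) hp hp' hfm

theorem mul_eLpNorm_le_of_smul_le_convPow (lam : Measure G) [IsProbabilityMeasure lam] {n : ℕ}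
    {c : ℝ≥0∞} (hgood : c • μ ≤ convPow lam n) {p : ℝ≥0∞} (hp : 1 ≤ p) (hp' : p ≠ ⊤)
    {f : G → ℝ} (hfm : Measurable f) (hf : MemLp f p μ) (hmean : ∫ x, f x ∂μ = 0) :
    c * eLpNorm f p μ ≤ n * eLpNorm (f - translateAverage lam f) p μ := by
  have hc : c ≤ 1 := by simpa using hgood Set.univ
  set Af := translateAverage (convPow lam n) f
  have hAfm : Measurable Af := measurable_translateAverage _ hfm
  refine ENNReal.mul_le_of_le_add_one_sub_mul hf.eLpNorm_ne_top hc ?_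
  calc eLpNorm f p μ = eLpNorm ((f - Af) + Af) p μ := by rw [sub_add_cancel]
    _ ≤ eLpNorm (f - Af) p μ + eLpNorm Af p μ :=
        eLpNorm_add_le (hfm.sub hAfm).aestronglyMeasurable hAfm.aestronglyMeasurable hp
    _ ≤ n * eLpNorm (f - translateAverage lam f) p μ + (1 - c) * eLpNorm f p μ := by
        gcongr
        · exact eLpNorm_sub_translateAverage_convPow_le μ lam hp hp' hfm (hf.integrable hp) n
        · simpa using eLpNorm_translateAverage_le_of_smul_le μ hgood hp hp' hfm
            (hf.integrable hp) hmean

end CommGroup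

theorem map_sum_range_eq_convPow {Ω M : Type*} [MeasurableSpace Ω] {P : Measure Ω}
    [IsProbabilityMeasure P] [AddCommMonoid M] [MeasurableSpace M] [MeasurableAdd₂ M]
    {X : ℕ → Ω → M} (hX : ∀ i, Measurable (X i)) (hindep : iIndepFun X P)
    (hident : ∀ i, P.map (X i) = P.map (X 0)) (n : ℕ) :
    P.map (∑ i ∈ Finset.range n, X i) = convPow (P.map (X 0)) n := by
  induction n with
  | zero => exact (Measure.map_const P 0).trans (by simp [convPow])
  | succ n ih =>
    have hsum : Measurable (∑ i ∈ Finset.range n, X i) := by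
      simpa only [← Finset.sum_fn] using Finset.measurable_sum _ fun i _ => hX i
    rw [Finset.sum_range_succ, (hindep.indepFun_finsetSum_of_notMem hX
      Finset.notMem_range_self).map_add_eq_map_conv_map hsum (hX n), ih, hident n]
    rfl

theorem ofReal_div_natCast_mul_le {c : ℝ} {n : ℕ} {N D : ℝ≥0∞}
    (h : ENNReal.ofReal c * N ≤ n * D) : ENNReal.ofReal (c / n) * N ≤ D := by
  rcases n.eq_zero_or_pos with rfl | hn
  · simp
  rw [ofReal_div_of_pos (by positivity), ofReal_natCast, div_eq_mul_inv, mul_right_comm,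
    ← div_eq_mul_inv, ENNReal.div_le_iff (by positivity) (natCast_ne_top n), mul_comm D]
  exact h

theorem stmt6_general
    {Ω : Type*} [MeasureSpace Ω] (P : Measure Ω) [IsProbabilityMeasure P]
    (Y : ℕ → Ω → ℝ) (hmeas : ∀ i, Measurable (Y i))
    (hindep : iIndepFun Y P)
    (hident : ∀ i, Measure.map (Y i) P = Measure.map (Y 0) P)
    (t : ℝ)
    (n : ℕ) (c : ℝ)
    (hgood : ∀ A : Set UnitAddCircle, MeasurableSet A →
      ENNReal.ofReal c * volume A ≤
        P ((fun ω => ((t * ∑ i ∈ Finset.range n, Y i ω : ℝ) : UnitAddCircle)) ⁻¹' A))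
    (p : ℝ≥0∞) (hp : 1 ≤ p) (hp' : p ≠ ⊤)
    (f : UnitAddCircle → ℝ) (hfm : Measurable f) (hf : MemLp f p volume)
    (hmean : ∫ x, f x = 0) :
    ENNReal.ofReal (c / n) * eLpNorm f p volume ≤
      eLpNorm (fun x => f x - ∫ ω, f (x + ((t * Y 0 ω : ℝ) : UnitAddCircle)) ∂P)
        p volume := by
  have : IsProbabilityMeasure (volume : Measure UnitAddCircle) := ⟨UnitAddCircle.measure_univ⟩
  have hφ : Measurable fun r : ℝ => ((t * r : ℝ) : UnitAddCircle) := by fun_prop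
  set Z : ℕ → Ω → UnitAddCircle := fun i ω => ((t * Y i ω : ℝ) : UnitAddCircle)
  have hZ (i : ℕ) : Measurable (Z i) := hφ.comp (hmeas i)
  have hZlaw (i : ℕ) : P.map (Z i) = (P.map (Y i)).map fun r => ((t * r : ℝ) : UnitAddCircle) :=
    (Measure.map_map hφ (hmeas i)).symm
  have hlaw : P.map (∑ i ∈ Finset.range n, Z i) = convPow (P.map (Z 0)) n :=
    map_sum_range_eq_convPow hZ (hindep.comp _ fun _ => hφ)
      (fun i => by rw [hZlaw, hident, ← hZlaw]) n
  have : IsProbabilityMeasure (P.map (Z 0)) := Measure.isProbabilityMeasure_map (hZ 0).aemeasurable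
  have hsum : ∑ i ∈ Finset.range n, Z i
      = fun ω => ((t * ∑ i ∈ Finset.range n, Y i ω : ℝ) : UnitAddCircle) := by
    ext ω
    simp [Z, Finset.mul_sum, ← QuotientAddGroup.mk_sum]
  have hsmul : ENNReal.ofReal c • volume ≤ convPow (P.map (Z 0)) n := by
    refine Measure.le_iff.2 fun A hA => ?_
    rw [← hlaw, hsum, Measure.map_apply (by fun_prop) hA]
    exact hgood A hA
  have hA : f - translateAverage (P.map (Z 0)) f
      = fun x => f x - ∫ ω, f (x + ((t * Y 0 ω : ℝ) : UnitAddCircle)) ∂P := by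
    ext x
    rw [Pi.sub_apply, translateAverage, integral_map (f := fun a => f (x + a)) (hZ 0).aemeasurable
      (hfm.comp (measurable_const_add x)).aestronglyMeasurable]
  exact ofReal_div_natCast_mul_le <|
    hA ▸ mul_eLpNorm_le_of_smul_le_convPow volume _ hsmul hp hp' hfm hf hmean

/-- If for some `n` the law of `(t(Y_1 + ⋯ + Y_n)) mod 1` is `c`-good, then the
operator `(A_t f)(x) = E f(x ⊕ tY)` satisfies `‖f - A_t f‖_p ≥ (c/n) ‖f‖_p` on
mean-zero functions. -/
theorem stmt6
    {Ω : Type*} [MeasureSpace Ω] (P : Measure Ω) [IsProbabilityMeasure P]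
    (Y : ℕ → Ω → ℝ) (hmeas : ∀ i, Measurable (Y i))
    (hindep : iIndepFun Y P)
    (hident : ∀ i, Measure.map (Y i) P = Measure.map (Y 0) P)
    (t : ℝ) (ht : 0 < t)
    (n : ℕ) (hn : 0 < n) (c : ℝ) (hc : 0 < c)
    (hgood : ∀ A : Set UnitAddCircle, MeasurableSet A →
      ENNReal.ofReal c * volume A ≤
        P ((fun ω => ((t * ∑ i ∈ Finset.range n, Y i ω : ℝ) : UnitAddCircle)) ⁻¹' A))
    (p : ℝ≥0∞) (hp : 1 ≤ p) (hp' : p ≠ ⊤)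
    (f : UnitAddCircle → ℝ) (hfm : Measurable f) (hf : MemLp f p volume)
    (hmean : ∫ x, f x = 0) :
    ENNReal.ofReal (c / n) * eLpNorm f p volume ≤
      eLpNorm (fun x => f x - ∫ ω, f (x + ((t * Y 0 ω : ℝ) : UnitAddCircle)) ∂P)
        p volume :=
  stmt6_general P Y hmeas hindep hident t n c hgood p hp hp' f hfm hf hmean
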